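/- arXiv:1709.05843 — 5 statements merged into one kernel-verified Lean document; each statement's English description precedes it below -/
import Mathlib

section
/- Let a > 0, let c be a point of the Euclidean plane, and for k = 0, 1, …, 5 let v_k = c + a·(cos(kπ/3), sin(kπ/3)) be the vertices of a regular hexagon with side length a and center c. Then every point x in the convex hull of {v_0, …, v_5} satisfies dist x v_k ≤ a for some k. -/
lemma le_of_sq_le_sq' {x y : ℝ} (hy : 0 ≤ y) (h : x ^ 2 ≤ y ^ 2) : x ≤ y := by
  nlinarith [sq_nonneg (x - y), sq_nonneg (x + y)]

set_option maxHeartbeats 1000000 in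
lemma hex_key (p q : ℝ) :
    ∃ k : Fin 6, Real.sqrt 3 * Real.sqrt (p ^ 2 + q ^ 2) ≤
      2 * (p * Real.cos ((k : ℕ) * Real.pi / 3) +
           q * Real.sin ((k : ℕ) * Real.pi / 3)) := by
  have hr2 : Real.sqrt 3 ^ 2 = 3 := Real.sq_sqrt (by norm_num)
  have hr0 : (0:ℝ) ≤ Real.sqrt 3 := Real.sqrt_nonneg _
  have hs0 : (0:ℝ) ≤ Real.sqrt (p ^ 2 + q ^ 2) := Real.sqrt_nonneg _
  have hs2 : Real.sqrt (p ^ 2 + q ^ 2) ^ 2 = p ^ 2 + q ^ 2 :=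
    Real.sq_sqrt (by positivity)
  set r := Real.sqrt 3 with hr
  set s := Real.sqrt (p ^ 2 + q ^ 2) with hsdef
  clear_value r s
  have c2 : Real.cos ((2:ℝ) * Real.pi / 3) = -(1/2) := by
    rw [show (2:ℝ) * Real.pi / 3 = Real.pi - Real.pi/3 by ring,
        Real.cos_pi_sub, Real.cos_pi_div_three]
  have s2 : Real.sin ((2:ℝ) * Real.pi / 3) = r / 2 := by
    rw [show (2:ℝ) * Real.pi / 3 = Real.pi - Real.pi/3 by ring,
        Real.sin_pi_sub, Real.sin_pi_div_three, ← hr]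
  have c4 : Real.cos ((4:ℝ) * Real.pi / 3) = -(1/2) := by
    rw [show (4:ℝ) * Real.pi / 3 = Real.pi - (-(Real.pi/3)) by ring,
        Real.cos_pi_sub, Real.cos_neg, Real.cos_pi_div_three]
  have s4 : Real.sin ((4:ℝ) * Real.pi / 3) = -(r / 2) := by
    rw [show (4:ℝ) * Real.pi / 3 = Real.pi - (-(Real.pi/3)) by ring,
        Real.sin_pi_sub, Real.sin_neg, Real.sin_pi_div_three, ← hr]
  have c5 : Real.cos ((5:ℝ) * Real.pi / 3) = 1/2 := by
    rw [show (5:ℝ) * Real.pi / 3 = -(Real.pi/3) + 2*Real.pi by ring,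
        Real.cos_add_two_pi, Real.cos_neg, Real.cos_pi_div_three]
  have s5 : Real.sin ((5:ℝ) * Real.pi / 3) = -(r / 2) := by
    rw [show (5:ℝ) * Real.pi / 3 = -(Real.pi/3) + 2*Real.pi by ring,
        Real.sin_add_two_pi, Real.sin_neg, Real.sin_pi_div_three, ← hr]
  rcases le_total 0 q with hq | hq
  · rcases le_total (r * q) p with h1 | h1
    · have hp : 0 ≤ p := le_trans (mul_nonneg hr0 hq) h1
      refine ⟨0, ?_⟩
      norm_num
      refine le_of_sq_le_sq' (by linarith) ?_
      nlinarith [mul_self_le_mul_self (mul_nonneg hr0 hq) h1, sq_nonneg q]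
    · rcases le_total 0 p with h2 | h2
      · refine ⟨1, ?_⟩
        norm_num [show ((1:Fin 6):ℕ) = 1 by rfl, Real.cos_pi_div_three, Real.sin_pi_div_three, ← hr]
        nlinarith [mul_nonneg h2 (sub_nonneg.2 h1), sq_nonneg (p + r*q - r*s),
          mul_nonneg hr0 hs0, mul_nonneg hr0 hq]
      · rcases le_total (-p) (r * q) with h3 | h3
        · refine ⟨2, ?_⟩
          norm_num [show ((2:Fin 6):ℕ) = 2 by rfl, c2, s2]
          refine le_of_sq_le_sq' (by nlinarith [mul_nonneg hr0 hq]) ?_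
          nlinarith [mul_nonneg (neg_nonneg.2 h2) (by linarith : (0:ℝ) ≤ r*q + p)]
        · have hp : p ≤ 0 := by nlinarith [mul_nonneg hr0 hq]
          refine ⟨3, ?_⟩
          norm_num [show ((3:Fin 6):ℕ) = 3 by rfl, show (3:ℝ) * Real.pi / 3 = Real.pi by ring, Real.cos_pi, Real.sin_pi]
          refine le_of_sq_le_sq' (by linarith) ?_
          nlinarith [mul_self_le_mul_self (mul_nonneg hr0 hq) h3, sq_nonneg q]
  · rcases le_total (r * (-q)) p with h1 | h1
    · have hp : 0 ≤ p := le_trans (mul_nonneg hr0 (neg_nonneg.2 hq)) h1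
      refine ⟨0, ?_⟩
      norm_num
      refine le_of_sq_le_sq' (by linarith) ?_
      nlinarith [mul_self_le_mul_self (mul_nonneg hr0 (neg_nonneg.2 hq)) h1, sq_nonneg q]
    · rcases le_total 0 p with h2 | h2
      · refine ⟨5, ?_⟩
        norm_num [show ((5:Fin 6):ℕ) = 5 by rfl, c5, s5]
        refine le_of_sq_le_sq' (by nlinarith [mul_nonneg hr0 (neg_nonneg.2 hq)]) ?_
        nlinarith [mul_nonneg h2 (by linarith : (0:ℝ) ≤ -(r*q) - p)]
      · rcases le_total (-p) (r * (-q)) with h3 | h3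
        · refine ⟨4, ?_⟩
          norm_num [show ((4:Fin 6):ℕ) = 4 by rfl, c4, s4]
          refine le_of_sq_le_sq' (by nlinarith [mul_nonneg hr0 (neg_nonneg.2 hq)]) ?_
          nlinarith [mul_nonneg (neg_nonneg.2 h2) (by linarith : (0:ℝ) ≤ -(r*q) + p)]
        · have hp : p ≤ 0 := by nlinarith [mul_nonneg hr0 (neg_nonneg.2 hq)]
          refine ⟨3, ?_⟩
          norm_num [show ((3:Fin 6):ℕ) = 3 by rfl, show (3:ℝ) * Real.pi / 3 = Real.pi by ring, Real.cos_pi, Real.sin_pi]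
          refine le_of_sq_le_sq' (by linarith) ?_
          nlinarith [mul_self_le_mul_self (mul_nonneg hr0 (neg_nonneg.2 hq)) h3, sq_nonneg q]

/-- Every point of a regular hexagon with side length `a` and center `c` in the
Euclidean plane is within distance `a` (the circumradius) of one of its six
vertices `v k = c + a·(cos(kπ/3), sin(kπ/3))`. -/
theorem regular_hexagon_covered (a : ℝ) (ha : 0 < a)
    (c : EuclideanSpace ℝ (Fin 2)) (v : Fin 6 → EuclideanSpace ℝ (Fin 2))
    (hv : ∀ k : Fin 6,
      v k = c + (EuclideanSpace.equiv (Fin 2) ℝ).symm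
        ![a * Real.cos ((k : ℕ) * Real.pi / 3),
          a * Real.sin ((k : ℕ) * Real.pi / 3)]) :
    ∀ x ∈ convexHull ℝ (Set.range v), ∃ k : Fin 6, dist x (v k) ≤ a := by
  intro x hx
  have hball : dist x c ≤ a := by
    have hsub : convexHull ℝ (Set.range v) ⊆ Metric.closedBall c a := by
      apply convexHull_min ?_ (convex_closedBall c a)
      rintro _ ⟨k, rfl⟩
      rw [Metric.mem_closedBall, hv k, dist_eq_norm, add_sub_cancel_left,
        EuclideanSpace.norm_eq]
      have htrig := Real.sin_sq_add_cos_sq ((k : ℕ) * Real.pi / 3)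
      have : ∑ i : Fin 2, ‖((EuclideanSpace.equiv (Fin 2) ℝ).symm
          ![a * Real.cos ((k : ℕ) * Real.pi / 3),
            a * Real.sin ((k : ℕ) * Real.pi / 3)]) i‖ ^ 2 = a ^ 2 := by
        simp only [Fin.sum_univ_two]
        rw [show ((EuclideanSpace.equiv (Fin 2) ℝ).symm
            ![a * Real.cos ((k : ℕ) * Real.pi / 3),
              a * Real.sin ((k : ℕ) * Real.pi / 3)]) 0
            = a * Real.cos ((k : ℕ) * Real.pi / 3) from rfl,
          show ((EuclideanSpace.equiv (Fin 2) ℝ).symm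
            ![a * Real.cos ((k : ℕ) * Real.pi / 3),
              a * Real.sin ((k : ℕ) * Real.pi / 3)]) 1
            = a * Real.sin ((k : ℕ) * Real.pi / 3) from rfl]
        simp only [Real.norm_eq_abs, sq_abs]
        nlinarith [htrig]
      rw [this, Real.sqrt_sq ha.le]
    exact hsub hx
  have hdxc : dist x c = Real.sqrt ((x 0 - c 0) ^ 2 + (x 1 - c 1) ^ 2) := by
    rw [EuclideanSpace.dist_eq]
    simp [Fin.sum_univ_two, Real.dist_eq, sq_abs]
  have hs_le : Real.sqrt ((x 0 - c 0) ^ 2 + (x 1 - c 1) ^ 2) ≤ a := by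
    rw [← hdxc]; exact hball
  obtain ⟨k, hk⟩ := hex_key (x 0 - c 0) (x 1 - c 1)
  refine ⟨k, ?_⟩
  have hvk0 : v k 0 = c 0 + a * Real.cos ((k : ℕ) * Real.pi / 3) := by
    rw [hv k]; simp
  have hvk1 : v k 1 = c 1 + a * Real.sin ((k : ℕ) * Real.pi / 3) := by
    rw [hv k]; simp
  have hdist : dist x (v k) =
      Real.sqrt ((x 0 - v k 0) ^ 2 + (x 1 - v k 1) ^ 2) := by
    rw [EuclideanSpace.dist_eq]
    simp [Fin.sum_univ_two, Real.dist_eq, sq_abs]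
  rw [hdist, hvk0, hvk1]
  have hr2 : Real.sqrt 3 ^ 2 = 3 := Real.sq_sqrt (by norm_num)
  have hr0 : (0:ℝ) ≤ Real.sqrt 3 := Real.sqrt_nonneg _
  have hr1 : (1:ℝ) ≤ Real.sqrt 3 := by nlinarith
  have hs0 : (0:ℝ) ≤ Real.sqrt ((x 0 - c 0) ^ 2 + (x 1 - c 1) ^ 2) :=
    Real.sqrt_nonneg _
  have hs2 : Real.sqrt ((x 0 - c 0) ^ 2 + (x 1 - c 1) ^ 2) ^ 2
      = (x 0 - c 0) ^ 2 + (x 1 - c 1) ^ 2 := Real.sq_sqrt (by positivity)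
  have htrig := Real.sin_sq_add_cos_sq ((k : ℕ) * Real.pi / 3)
  have hkey : (x 0 - (c 0 + a * Real.cos ((k : ℕ) * Real.pi / 3))) ^ 2 +
      (x 1 - (c 1 + a * Real.sin ((k : ℕ) * Real.pi / 3))) ^ 2 ≤ a ^ 2 := by
    nlinarith [mul_le_mul_of_nonneg_left hk ha.le,
      mul_nonneg hs0 (sub_nonneg.2 hs_le),
      mul_nonneg (mul_nonneg ha.le hs0) (sub_nonneg.2 hr1), htrig]
  calc Real.sqrt ((x 0 - (c 0 + a * Real.cos ((k : ℕ) * Real.pi / 3))) ^ 2 +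
      (x 1 - (c 1 + a * Real.sin ((k : ℕ) * Real.pi / 3))) ^ 2)
      ≤ Real.sqrt (a ^ 2) := Real.sqrt_le_sqrt hkey
    _ = a := Real.sqrt_sq ha.le
end

section
/- Let a > 0 and set v₁ = (a, 0) and v₂ = (a/2, (√3/2)·a) in the Euclidean plane. For every point x of the plane there exist integers m, n such that dist x (m·v₁ + n·v₂) ≤ a / √3. -/
/-!
Write `x = s • v₁ + t • v₂` with real `s, t`. Since `‖p • v₁ + q • v₂‖² = a² (p² + p q + q²)`,
it suffices to find integers `m, n` with `Q(s - m, t - n) ≤ 1/3` for `Q(p, q) = p² + p q + q²`.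
Reducing `s, t` modulo `1` and using the central symmetry of the unit square, this comes down
to the triangle with vertices `(0, 0), (1, 0), (0, 1)`: its three medians cut it into regions,
each within `Q`-distance `1/3` of its own vertex.
-/

open Real

lemma exists_vertex_sq_add_mul_add_sq_le_of_mem_triangle {u v : ℝ} (hu : 0 ≤ u) (hv : 0 ≤ v)
    (huv : u + v ≤ 1) :
    ∃ m n : ℤ, (u - m) ^ 2 + (u - m) * (v - n) + (v - n) ^ 2 ≤ 1 / 3 := by
  rcases le_or_gt (2 * u + v) 1 with h₁ | h₁
  · rcases le_or_gt (u + 2 * v) 1 with h₂ | h₂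
    · exact ⟨0, 0, by push_cast; nlinarith [mul_nonneg hu hv]⟩
    · exact ⟨0, 1, by push_cast; nlinarith [mul_nonneg hu hv]⟩
  · rcases le_or_gt v u with h₂ | h₂
    · exact ⟨1, 0, by push_cast; nlinarith [mul_nonneg hu hv]⟩
    · exact ⟨0, 1, by push_cast; nlinarith [mul_nonneg hu hv]⟩

lemma exists_int_sq_add_mul_add_sq_le (u v : ℝ) :
    ∃ m n : ℤ, (u - m) ^ 2 + (u - m) * (v - n) + (v - n) ^ 2 ≤ 1 / 3 := by
  suffices h : ∀ u v : ℝ, 0 ≤ u → u < 1 → 0 ≤ v → v < 1 →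
      ∃ m n : ℤ, (u - m) ^ 2 + (u - m) * (v - n) + (v - n) ^ 2 ≤ 1 / 3 by
    obtain ⟨m, n, hmn⟩ := h (Int.fract u) (Int.fract v) (Int.fract_nonneg u) (Int.fract_lt_one u)
      (Int.fract_nonneg v) (Int.fract_lt_one v)
    refine ⟨⌊u⌋ + m, ⌊v⌋ + n, ?_⟩
    simp only [Int.fract, Int.cast_add] at hmn ⊢
    convert hmn using 2 <;> ring
  intro u v hu₀ hu₁ hv₀ hv₁
  rcases le_or_gt (u + v) 1 with huv | huv
  · exact exists_vertex_sq_add_mul_add_sq_le_of_mem_triangle hu₀ hv₀ huv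
  · -- `(u, v) ↦ (1 - u, 1 - v)` swaps the two triangles of the unit square and preserves `Q`
    obtain ⟨m, n, hmn⟩ := exists_vertex_sq_add_mul_add_sq_le_of_mem_triangle
      (u := 1 - u) (v := 1 - v) (by linarith) (by linarith) (by linarith)
    refine ⟨1 - m, 1 - n, ?_⟩
    push_cast
    linarith

lemma norm_sq_smul_add_smul_triangular (a p q : ℝ) :
    ‖p • !₂[a, 0] + q • !₂[a / 2, √3 / 2 * a]‖ ^ 2 = a ^ 2 * (p ^ 2 + p * q + q ^ 2) := by
  have h3 : √3 ^ 2 = 3 := sq_sqrt (by norm_num)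
  simp only [EuclideanSpace.real_norm_sq_eq, PiLp.add_apply, PiLp.smul_apply, smul_eq_mul,
    Fin.sum_univ_two, Fin.isValue, Matrix.cons_val_zero, Matrix.cons_val_one,
    Matrix.cons_val_fin_one, mul_zero, zero_add]
  linear_combination (q * a / 2) ^ 2 * h3

lemma exists_eq_smul_add_smul_triangular {a : ℝ} (ha : a ≠ 0) (x : EuclideanSpace ℝ (Fin 2)) :
    ∃ s t : ℝ, x = s • !₂[a, 0] + t • !₂[a / 2, √3 / 2 * a] := by
  refine ⟨x 0 / a - x 1 / (√3 * a), 2 * x 1 / (√3 * a), ?_⟩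
  have h3 : √3 ≠ 0 := by positivity
  ext i
  fin_cases i <;>
    simp only [Fin.zero_eta, Fin.mk_one, Fin.isValue, PiLp.add_apply, PiLp.smul_apply,
      Matrix.cons_val_zero, Matrix.cons_val_one, Matrix.cons_val_fin_one, smul_eq_mul, mul_zero,
      zero_add] <;>
    field_simp; ring

/-- The covering radius of the equilateral-triangular lattice of side `a` is at
most `a / √3`: every point of the Euclidean plane is within `a / √3` of some
lattice point `m·v₁ + n·v₂` where `v₁ = (a, 0)`, `v₂ = (a/2, (√3/2)a)`. -/
theorem triangular_lattice_covers (a : ℝ) (ha : 0 < a)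
    (x : EuclideanSpace ℝ (Fin 2)) :
    ∃ m n : ℤ,
      dist x (m • (!₂[a, 0] : EuclideanSpace ℝ (Fin 2)) +
              n • (!₂[a / 2, Real.sqrt 3 / 2 * a] : EuclideanSpace ℝ (Fin 2)))
        ≤ a / Real.sqrt 3 := by
  obtain ⟨s, t, rfl⟩ := exists_eq_smul_add_smul_triangular ha.ne' x
  obtain ⟨m, n, hmn⟩ := exists_int_sq_add_mul_add_sq_le s t
  refine ⟨m, n, ?_⟩
  have hdiff : s • !₂[a, 0] + t • !₂[a / 2, √3 / 2 * a] - (m • !₂[a, 0] + n • !₂[a / 2, √3 / 2 * a])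
      = (s - m) • !₂[a, 0] + (t - n) • (!₂[a / 2, √3 / 2 * a] : EuclideanSpace ℝ (Fin 2)) := by
    simp only [sub_smul, Int.cast_smul_eq_zsmul]
    abel
  rw [dist_eq_norm, hdiff, ← sq_le_sq₀ (norm_nonneg _) (by positivity),
    norm_sq_smul_add_smul_triangular, div_pow, sq_sqrt (by norm_num : (0 : ℝ) ≤ 3)]
  linarith [mul_le_mul_of_nonneg_left hmn (sq_nonneg a)]
end

section
/- Let a > 0 and set u₁ = (3a/2, (√3/2)·a), u₂ = (3a/2, −(√3/2)·a) and w = (a, 0) in the Euclidean plane. For every point x of the plane there exist integers m, n and ε ∈ {0, 1} such that dist x (m·u₁ + n·u₂ + ε·w) ≤ a. -/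
open RealInnerProductSpace

/-! If `u` and `v` have equal length and meet at `60°`, then `‖f • u + g • v‖² =
‖u‖² (f² + f g + g²)`. Any `(f, g)` lies in a unit triangle with corners in `ℤ²`; with
barycentric weights `μᵢ`, the weighted sum of the squared distances (for this form) to the
corners is `∑_{i<j} μᵢ μⱼ ≤ 1/3`, so some corner is within `‖u‖ / √3`. For the honeycomb, the
triangular sublattice spanned by `u₁, u₂` has side `√3 a`, so it alone covers the plane with
radius `a`: `ε = 0` always works. -/

lemma exists_int_three_mul_sq_add_mul_add_sq_le_one_of_mem_triangle {f g : ℝ}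
    (hf : 0 ≤ f) (hg : 0 ≤ g) (hfg : f + g ≤ 1) :
    ∃ i j : ℤ, 3 * ((f - i) ^ 2 + (f - i) * (g - j) + (g - j) ^ 2) ≤ 1 := by
  by_contra! h
  have h₀ := h 0 0
  have h₁ := h 1 0
  have h₂ := h 0 1
  push_cast at h₀ h₁ h₂
  nlinarith

lemma exists_int_three_mul_sq_add_mul_add_sq_le_one (f g : ℝ) :
    ∃ m n : ℤ, 3 * ((f - m) ^ 2 + (f - m) * (g - n) + (g - n) ^ 2) ≤ 1 := by
  rcases le_or_gt (Int.fract f + Int.fract g) 1 with h | h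
  · obtain ⟨i, j, hij⟩ := exists_int_three_mul_sq_add_mul_add_sq_le_one_of_mem_triangle
      (Int.fract_nonneg f) (Int.fract_nonneg g) h
    refine ⟨⌊f⌋ + i, ⌊g⌋ + j, le_of_eq_of_le ?_ hij⟩
    rw [Int.fract, Int.fract]
    push_cast
    ring
  · -- the upper triangle of the unit square, reflected through its centre
    obtain ⟨i, j, hij⟩ := exists_int_three_mul_sq_add_mul_add_sq_le_one_of_mem_triangle
      (sub_nonneg.2 (Int.fract_lt_one f).le) (sub_nonneg.2 (Int.fract_lt_one g).le)
      (by linarith)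
    refine ⟨⌊f⌋ + 1 - i, ⌊g⌋ + 1 - j, le_of_eq_of_le ?_ hij⟩
    rw [Int.fract, Int.fract]
    push_cast
    ring

section TriangularLattice

variable {E : Type*} [NormedAddCommGroup E] [InnerProductSpace ℝ E] {u v : E}

lemma norm_smul_add_smul_sq_of_inner_eq (hv : ‖v‖ = ‖u‖) (huv : 2 * ⟪u, v⟫ = ‖u‖ ^ 2)
    (f g : ℝ) : ‖f • u + g • v‖ ^ 2 = ‖u‖ ^ 2 * (f ^ 2 + f * g + g ^ 2) := by
  rw [norm_add_sq_real, norm_smul, norm_smul, inner_smul_left, inner_smul_right, hv,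
    mul_pow, mul_pow, Real.norm_eq_abs, Real.norm_eq_abs, sq_abs, sq_abs, conj_trivial]
  linear_combination f * g * huv

theorem exists_int_sqrt_three_mul_dist_le (hv : ‖v‖ = ‖u‖) (huv : 2 * ⟪u, v⟫ = ‖u‖ ^ 2)
    (s t : ℝ) : ∃ m n : ℤ, √3 * dist (s • u + t • v) ((m : ℝ) • u + (n : ℝ) • v) ≤ ‖u‖ := by
  obtain ⟨m, n, hmn⟩ := exists_int_three_mul_sq_add_mul_add_sq_le_one s t
  refine ⟨m, n, (sq_le_sq₀ (by positivity) (norm_nonneg u)).1 ?_⟩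
  have hdiff : s • u + t • v - ((m : ℝ) • u + (n : ℝ) • v) = (s - m) • u + (t - n) • v := by
    simp only [sub_smul]
    abel
  rw [dist_eq_norm, hdiff, mul_pow, Real.sq_sqrt zero_le_three,
    norm_smul_add_smul_sq_of_inner_eq hv huv]
  nlinarith

end TriangularLattice

/-- The covering radius of the vertex set of the regular hexagonal (honeycomb)
grid with edge length `a` is at most `a`: every point of the Euclidean plane is
within distance `a` of some vertex `m·u₁ + n·u₂ + ε·w`, with
`u₁ = (3a/2, (√3/2)a)`, `u₂ = (3a/2, −(√3/2)a)`, `w = (a, 0)`, and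
`ε ∈ {0, 1}`. -/
theorem hexagonal_grid_covers (a : ℝ) (ha : 0 < a)
    (x : EuclideanSpace ℝ (Fin 2)) :
    ∃ (m n ε : ℤ), (ε = 0 ∨ ε = 1) ∧
      dist x (m • (!₂[3 * a / 2, Real.sqrt 3 / 2 * a] : EuclideanSpace ℝ (Fin 2)) +
              n • (!₂[3 * a / 2, -(Real.sqrt 3 / 2 * a)] : EuclideanSpace ℝ (Fin 2)) +
              ε • (!₂[a, 0] : EuclideanSpace ℝ (Fin 2))) ≤ a := by
  set u : EuclideanSpace ℝ (Fin 2) := !₂[3 * a / 2, Real.sqrt 3 / 2 * a]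
  set v : EuclideanSpace ℝ (Fin 2) := !₂[3 * a / 2, -(Real.sqrt 3 / 2 * a)]
  have hs : √3 ^ 2 = 3 := Real.sq_sqrt zero_le_three
  have hu : ‖u‖ = √3 * a := by
    rw [EuclideanSpace.norm_eq, Real.sqrt_eq_iff_mul_self_eq_of_pos (by positivity)]
    simp only [Real.norm_eq_abs, sq_abs, Fin.sum_univ_two, Matrix.cons_val_zero,
      Matrix.cons_val_one, Matrix.cons_val_fin_one, u]
    nlinarith
  have hv : ‖v‖ = ‖u‖ := by
    simp [u, v, EuclideanSpace.norm_eq]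
  have huv : 2 * ⟪u, v⟫ = ‖u‖ ^ 2 := by
    rw [hu]
    simp only [PiLp.inner_apply, RCLike.inner_apply, conj_trivial, Fin.sum_univ_two,
      Matrix.cons_val_zero, Matrix.cons_val_one, Matrix.cons_val_fin_one, u, v]
    nlinarith
  obtain ⟨s, t, rfl⟩ : ∃ s t : ℝ, x = s • u + t • v :=
    ⟨x 0 / (3 * a) + x 1 / (√3 * a), x 0 / (3 * a) - x 1 / (√3 * a), by
      ext i
      fin_cases i <;> simp [u, v] <;> field_simp <;> ring⟩
  obtain ⟨m, n, hmn⟩ := exists_int_sqrt_three_mul_dist_le hv huv s t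
  refine ⟨m, n, 0, Or.inl rfl, ?_⟩
  rw [Int.cast_smul_eq_zsmul, Int.cast_smul_eq_zsmul, hu] at hmn
  rw [zero_smul, add_zero]
  exact le_of_mul_le_mul_left hmn (by positivity)
end

section
/- Let a > 0 and set f₁ = (a/2, a/2, 0), f₂ = (0, a/2, a/2), f₃ = (a/2, 0, a/2) in Euclidean three-space. For every point x of three-space there exist integers m, n, p such that dist x (m·f₁ + n·f₂ + p·f₃) ≤ a / 2. -/
/-!
In units of `a/2` the FCC lattice is the checkerboard lattice
`D₃ = {z ∈ ℤ³ : z₀ + z₁ + z₂ even}`, so it suffices to show that `Dₙ` has covering radius at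
most `1` for `n ≤ 4`. Round every coordinate of a point `y` to the nearest integer; the
deviations satisfy `|eᵢ| ≤ t ≤ 1/2`, where `t` is the largest one. If the rounded point lies in
`Dₙ` its squared distance to `y` is at most `n t² ≤ 1`. Otherwise replace the coordinate of
largest deviation by its second-nearest integer: this fixes the parity and changes the squared
distance by `1 - 2t`, giving `n t² + 1 - 2t ≤ 1`.
-/

open Finset

def checkerboardLattice (ι : Type*) [Fintype ι] : Set (ι → ℤ) :=
  {z | Even (∑ i, z i)}

lemma exists_odd_sq_sub_eq (e : ℝ) : ∃ s : ℤ, Odd s ∧ (e - s) ^ 2 = e ^ 2 + 1 - 2 * |e| := by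
  rcases le_total 0 e with he | he
  · exact ⟨1, odd_one, by rw [abs_of_nonneg he]; push_cast; ring⟩
  · exact ⟨-1, odd_neg_one, by rw [abs_of_nonpos he]; push_cast; ring⟩

lemma sum_sq_le_card_mul_sq {ι : Type*} [Fintype ι] {e : ι → ℝ} {t : ℝ}
    (he : ∀ i, |e i| ≤ t) : ∑ i, e i ^ 2 ≤ Fintype.card ι * t ^ 2 := by
  have hbound : ∀ i ∈ univ, e i ^ 2 ≤ t ^ 2 := fun i _ =>
    sq_le_sq.mpr ((he i).trans (le_abs_self t))
  simpa using Finset.sum_le_card_nsmul univ _ _ hbound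

theorem exists_mem_checkerboardLattice_sum_sq_sub_le_one {ι : Type*} [Fintype ι]
    (hι : Fintype.card ι ≤ 4) (y : ι → ℝ) :
    ∃ z ∈ checkerboardLattice ι, ∑ i, (y i - z i) ^ 2 ≤ 1 := by
  classical
  cases isEmpty_or_nonempty ι
  · exact ⟨0, by simp [checkerboardLattice], by simp⟩
  set r : ι → ℤ := fun i => round (y i)
  set e : ι → ℝ := fun i => y i - r i
  obtain ⟨i₀, -, hi₀⟩ := exists_max_image univ (fun i => |e i|) univ_nonempty
  set t := |e i₀|
  have ht : t ≤ 1 / 2 := abs_sub_round (y i₀)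
  have hsum : ∑ i, e i ^ 2 ≤ 4 * t ^ 2 :=
    (sum_sq_le_card_mul_sq fun i => hi₀ i (mem_univ i)).trans
      (by gcongr; exact_mod_cast hι)
  by_cases hr : r ∈ checkerboardLattice ι
  · exact ⟨r, hr, by nlinarith [abs_nonneg (e i₀)]⟩
  obtain ⟨s, hs, hsq⟩ := exists_odd_sq_sub_eq (e i₀)
  refine ⟨r + Pi.single i₀ s, ?_, ?_⟩
  · have hodd : Odd (∑ i, r i) := Int.not_even_iff_odd.mp hr
    simpa [checkerboardLattice, sum_add_distrib] using hodd.add_odd hs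
  · have hterm : ∀ i, (y i - ((r + Pi.single i₀ s : ι → ℤ) i : ℝ)) ^ 2
        = e i ^ 2 + Pi.single (M := fun _ => ℝ) i₀ (1 - 2 * t) i := by
      intro i
      rcases eq_or_ne i i₀ with rfl | hi
      · simp only [Pi.add_apply, Pi.single_eq_same, Int.cast_add, t, e] at hsq ⊢
        linear_combination hsq
      · simp [hi, e]
    simp only [hterm, sum_add_distrib, sum_pi_single', mem_univ, if_true]
    nlinarith [abs_nonneg (e i₀)]

theorem exists_mem_checkerboardLattice_dist_le_one {ι : Type*} [Fintype ι]
    (hι : Fintype.card ι ≤ 4) (y : EuclideanSpace ℝ ι) :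
    ∃ z ∈ checkerboardLattice ι, dist y (WithLp.toLp 2 fun i => (z i : ℝ)) ≤ 1 := by
  obtain ⟨z, hz, hle⟩ := exists_mem_checkerboardLattice_sum_sq_sub_le_one hι y
  refine ⟨z, hz, ?_⟩
  simpa [EuclideanSpace.dist_eq, Real.dist_eq, sq_abs] using hle

lemma exists_add_eq_of_even_sum {u v w : ℤ} (h : Even (u + v + w)) :
    ∃ m n p : ℤ, m + p = u ∧ m + n = v ∧ n + p = w := by
  obtain ⟨k, hk⟩ := h
  exact ⟨u + v - k, k - u, k - v, by omega, by omega, by omega⟩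

/-- The covering radius of the face-centered cubic (FCC) lattice with cubic
parameter `a` is at most `a/2`: every point of Euclidean three-space is within
`a/2` of some lattice point `m·f₁ + n·f₂ + p·f₃`, where `f₁ = (a/2, a/2, 0)`,
`f₂ = (0, a/2, a/2)`, `f₃ = (a/2, 0, a/2)`. -/
theorem fcc_lattice_covers (a : ℝ) (ha : 0 < a)
    (x : EuclideanSpace ℝ (Fin 3)) :
    ∃ m n p : ℤ,
      dist x (m • (!₂[a / 2, a / 2, 0] : EuclideanSpace ℝ (Fin 3)) +
              n • (!₂[0, a / 2, a / 2] : EuclideanSpace ℝ (Fin 3)) +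
              p • (!₂[a / 2, 0, a / 2] : EuclideanSpace ℝ (Fin 3))) ≤ a / 2 := by
  have hc : 0 < a / 2 := half_pos ha
  obtain ⟨z, hz, hdist⟩ :=
    exists_mem_checkerboardLattice_dist_le_one (by simp) ((a / 2)⁻¹ • x)
  obtain ⟨m, n, p, hu, hv, hw⟩ :=
    exists_add_eq_of_even_sum (by simpa [checkerboardLattice, Fin.sum_univ_three] using hz)
  refine ⟨m, n, p, ?_⟩
  have hlattice : m • (!₂[a / 2, a / 2, 0] : EuclideanSpace ℝ (Fin 3)) +
      n • (!₂[0, a / 2, a / 2] : EuclideanSpace ℝ (Fin 3)) +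
      p • (!₂[a / 2, 0, a / 2] : EuclideanSpace ℝ (Fin 3)) =
      (a / 2) • WithLp.toLp 2 fun i => (z i : ℝ) := by
    ext i
    fin_cases i <;> simp [← hu, ← hv, ← hw, zsmul_eq_mul] <;> ring
  calc dist x _
        = dist ((a / 2) • (a / 2)⁻¹ • x) ((a / 2) • WithLp.toLp 2 fun i => (z i : ℝ)) := by
        rw [hlattice, smul_inv_smul₀ hc.ne']
    _ = a / 2 * dist ((a / 2)⁻¹ • x) (WithLp.toLp 2 fun i => (z i : ℝ)) := by
        rw [dist_smul₀, Real.norm_of_nonneg hc.le]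
    _ ≤ a / 2 := mul_le_of_le_one_right hc.le hdist
end

section
/- Let a > 0 and set b₁ = (a, 0, 0), b₂ = (0, a, 0), b₃ = (a/2, a/2, a/2) in Euclidean three-space. For every point x of three-space there exist integers m, n, p such that dist x (m·b₁ + n·b₂ + p·b₃) ≤ (√5 / 4) · a. -/
/-!
Since `m • b₁ + n • b₂ + p • b₃ = a • (m + p/2, n + p/2, p/2)`, the lattice is `a • (ℤ³ ∪ (ℤ³ + ½𝟙))`:
the corners and the centres of the cubes of side `a`. After scaling to `a = 1`, let `vᵢ ∈ [0, ½]` be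
the distance of the fractional part of `xᵢ` from `½`. The squared distance to the nearest corner is
`∑ (½ - vᵢ)²`, and to the centre of the cube containing `x` it is `∑ vᵢ²`. The substitution
`v ↦ ½ - v` swaps the two, so one may assume `∑ vᵢ ≤ ¾`; on that polytope the convex function
`∑ vᵢ²` is maximal at the vertex `(½, ¼, 0)`, where it equals `5/16`.
-/

open Int in
theorem abs_sub_round_eq_half_sub_abs (y : ℝ) : |y - round y| = 1 / 2 - |fract y - 1 / 2| := by
  rw [abs_sub_round_eq_min]
  rcases le_total (fract y) (1 / 2) with h | h
  · rw [min_eq_left (by linarith), abs_of_nonpos (by linarith)]; ring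
  · rw [min_eq_right (by linarith), abs_of_nonneg (by linarith)]; ring

theorem sum_sq_le_of_sum_le {v : Fin 3 → ℝ} (hv : ∀ i, 0 ≤ v i ∧ v i ≤ 1 / 2)
    (hsum : ∑ i, v i ≤ 3 / 4) : ∑ i, v i ^ 2 ≤ 5 / 16 := by
  obtain ⟨h0, h0'⟩ := hv 0
  obtain ⟨h1, h1'⟩ := hv 1
  obtain ⟨h2, h2'⟩ := hv 2
  rw [Fin.sum_univ_three] at hsum ⊢
  -- split the polytope along `v₀ + v₁ = ½`; on each piece a product of facet inequalities suffices
  rcases le_total (1 / 2) (v 0 + v 1) with h | h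
  · nlinarith [mul_nonneg (sub_nonneg.2 h0') (sub_nonneg.2 h1'),
      mul_nonneg h2 (sub_nonneg.2 h), mul_nonneg h2 (sub_nonneg.2 h2'),
      mul_nonneg h0 (sub_nonneg.2 h0'), mul_nonneg h1 (sub_nonneg.2 h1')]
  · nlinarith [mul_nonneg h0 h1, mul_nonneg (sub_nonneg.2 h2') (sub_nonneg.2 h),
      mul_nonneg h0 (sub_nonneg.2 h0'), mul_nonneg h1 (sub_nonneg.2 h1'),
      mul_nonneg h2 (sub_nonneg.2 h2')]

theorem sum_sq_le_or_sum_half_sub_sq_le {v : Fin 3 → ℝ} (hv : ∀ i, 0 ≤ v i ∧ v i ≤ 1 / 2) :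
    ∑ i, v i ^ 2 ≤ 5 / 16 ∨ ∑ i, (1 / 2 - v i) ^ 2 ≤ 5 / 16 := by
  rcases le_total (∑ i, v i) (3 / 4) with h | h
  · exact .inl (sum_sq_le_of_sum_le hv h)
  · refine .inr (sum_sq_le_of_sum_le (fun i => ⟨by linarith [hv i], by linarith [hv i]⟩) ?_)
    simp only [Finset.sum_sub_distrib, Finset.sum_const, Finset.card_univ, Fintype.card_fin]
    norm_num; linarith

open Int in
theorem exists_sum_sq_sub_half_int_le (y : Fin 3 → ℝ) :
    ∃ (k : Fin 3 → ℤ) (δ : ℤ), ∑ i, (y i - (k i + δ / 2)) ^ 2 ≤ 5 / 16 := by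
  have hv : ∀ i, 0 ≤ |fract (y i) - 1 / 2| ∧ |fract (y i) - 1 / 2| ≤ 1 / 2 := fun i =>
    ⟨abs_nonneg _, abs_le.2 ⟨by linarith [fract_nonneg (y i)], by linarith [fract_lt_one (y i)]⟩⟩
  rcases sum_sq_le_or_sum_half_sub_sq_le hv with h | h
  · refine ⟨fun i => ⌊y i⌋, 1, ?_⟩
    simpa [sq_abs, ← self_sub_floor, sub_sub] using h
  · refine ⟨fun i => round (y i), 0, ?_⟩
    refine le_of_eq_of_le (Finset.sum_congr rfl fun i _ => ?_) h
    rw [← abs_sub_round_eq_half_sub_abs, sq_abs]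
    simp

noncomputable def bccPoint (a : ℝ) (m n p : ℤ) : EuclideanSpace ℝ (Fin 3) :=
  m • (!₂[a, 0, 0] : EuclideanSpace ℝ (Fin 3)) + n • (!₂[0, a, 0] : EuclideanSpace ℝ (Fin 3)) +
    p • (!₂[a / 2, a / 2, a / 2] : EuclideanSpace ℝ (Fin 3))

theorem bccPoint_apply (a : ℝ) (k : Fin 3 → ℤ) (δ : ℤ) (i : Fin 3) :
    bccPoint a (k 0 - k 2) (k 1 - k 2) (2 * k 2 + δ) i = a * (k i + δ / 2) := by
  fin_cases i <;>
    simp only [Fin.zero_eta, Fin.mk_one, Fin.reduceFinMk, Fin.isValue, bccPoint, PiLp.add_apply,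
      PiLp.smul_apply, Matrix.cons_val, Matrix.cons_val_zero, Matrix.cons_val_one, smul_zero,
      zsmul_eq_mul, Int.cast_sub, Int.cast_add, Int.cast_mul, Int.cast_ofNat, add_zero, zero_add] <;>
    ring

theorem EuclideanSpace.dist_le_of_sum_sq_le {ι : Type*} [Fintype ι] {x y : EuclideanSpace ℝ ι}
    {r : ℝ} (hr : 0 ≤ r) (h : ∑ i, (x i - y i) ^ 2 ≤ r ^ 2) : dist x y ≤ r := by
  rw [EuclideanSpace.dist_eq]
  simp only [Real.dist_eq, sq_abs]
  exact Real.sqrt_le_sqrt h |>.trans_eq (Real.sqrt_sq hr)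

/-- The covering radius of the body-centered cubic (BCC) lattice with cubic
parameter `a` is at most `(√5/4)·a`: every point of Euclidean three-space is
within `(√5/4)·a` of some lattice point `m·b₁ + n·b₂ + p·b₃`, where
`b₁ = (a, 0, 0)`, `b₂ = (0, a, 0)`, `b₃ = (a/2, a/2, a/2)`. -/
theorem bcc_lattice_covers (a : ℝ) (ha : 0 < a)
    (x : EuclideanSpace ℝ (Fin 3)) :
    ∃ m n p : ℤ,
      dist x (m • (!₂[a, 0, 0] : EuclideanSpace ℝ (Fin 3)) +
              n • (!₂[0, a, 0] : EuclideanSpace ℝ (Fin 3)) +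
              p • (!₂[a / 2, a / 2, a / 2] : EuclideanSpace ℝ (Fin 3)))
        ≤ Real.sqrt 5 / 4 * a := by
  obtain ⟨k, δ, hk⟩ := exists_sum_sq_sub_half_int_le fun i => x i / a
  refine ⟨k 0 - k 2, k 1 - k 2, 2 * k 2 + δ, ?_⟩
  refine EuclideanSpace.dist_le_of_sum_sq_le (by positivity) ?_
  have hscale : ∀ i, x i - bccPoint a (k 0 - k 2) (k 1 - k 2) (2 * k 2 + δ) i
      = a * (x i / a - (k i + δ / 2)) := fun i => by
    rw [bccPoint_apply]; field_simp
  calc ∑ i, (x i - bccPoint a (k 0 - k 2) (k 1 - k 2) (2 * k 2 + δ) i) ^ 2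
      = a ^ 2 * ∑ i, (x i / a - (k i + δ / 2)) ^ 2 := by
        simp only [hscale, mul_pow, Finset.mul_sum]
    _ ≤ a ^ 2 * (5 / 16) := by gcongr
    _ = (Real.sqrt 5 / 4 * a) ^ 2 := by
        rw [mul_pow, div_pow, Real.sq_sqrt (by norm_num)]; ring
end
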